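/- Let n ≥ 2 and d ≥ 1 be integers and let A_0, A_α, A_{αα} (1 ≤ α ≤ d) be real numbers. If Q(x) = A_0 + Σ_{α=1}^d A_α s_α(x) + Σ_{α=1}^d A_{αα} s_{αα}(x) ≥ 0 for all x ∈ K_n^d, then P_Q(X,Y) + A_0/(n − 1) ≥ 0 for all X, Y ∈ ℝ^d with ‖Y‖² + ‖X‖²/n ≤ 1, where P_Q(X,Y) = A_0 + √n Σ_{α=1}^d A_α X_α + (n − 1) Σ_{α=1}^d A_{αα} X_α² − n Σ_{α=1}^d A_{αα} Y_α². -/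

import Mathlib

/-! Take configurations `x_i = a + γ_i Y` with `∑ γ_i = 0`. Then
`Q(x) = Q(a, …, a) - ‖γ‖² R` with `R = ∑ A_αα Y_α²`, so for `R > 0` one wants `‖γ‖²` large
subject to `‖a + γ_i Y‖ ≤ 1`, i.e. every `γ_i` between the roots `m₁ ≤ 0 ≤ m₂` of a quadratic.
Putting all but one `γ_i` at an endpoint gives `‖γ‖² ≥ (n (1 - ‖a‖²) - 1) / ‖Y‖²`. With `a = 0`
this yields `R / ‖Y‖² ≤ A_0 / (n - 1)`; with `a = X / √n`, where `Q(a, …, a) = P_Q(X, Y) + n R`,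
it yields `P_Q(X, Y) ≥ -R / ‖Y‖²`. For `R ≤ 0` the constant configurations `0` and `X / √n`
suffice. -/

open scoped BigOperators

/-- `sLin n d α x = ∑ i, ξ_{i,α}` -/
noncomputable def sLin (n d : ℕ) (α : Fin d) (x : Fin n → Fin d → ℝ) : ℝ :=
  ∑ i, x i α

/-- `sQuad n d α x = ∑_{i ≠ j} ξ_{i,α} ξ_{j,α}` (sum over ordered pairs). -/
noncomputable def sQuad (n d : ℕ) (α : Fin d) (x : Fin n → Fin d → ℝ) : ℝ :=
  ∑ i, ∑ j, if i = j then 0 else x i α * x j α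

/-- `Qpoly n d A0 A B x = A0 + ∑ α A_α s_α(x) + ∑ α A_{αα} s_{αα}(x)` -/
noncomputable def Qpoly (n d : ℕ) (A0 : ℝ) (A B : Fin d → ℝ)
    (x : Fin n → Fin d → ℝ) : ℝ :=
  A0 + ∑ α, A α * sLin n d α x + ∑ α, B α * sQuad n d α x

/-- `PQ n d A0 A B X Y = A0 + √n ∑ A_α X_α + (n-1) ∑ A_{αα} X_α² - n ∑ A_{αα} Y_α²` -/
noncomputable def PQ (n d : ℕ) (A0 : ℝ) (A B : Fin d → ℝ) (X Y : Fin d → ℝ) : ℝ :=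
  A0 + Real.sqrt n * ∑ α, A α * X α
    + ((n : ℝ) - 1) * ∑ α, B α * (X α) ^ 2
    - n * ∑ α, B α * (Y α) ^ 2

open Finset

lemma exists_sum_eq_of_mem_Icc {m₁ m₂ : ℝ} (h : m₁ ≤ m₂) (n : ℕ) {S : ℝ}
    (h₁ : (n + 1) * m₁ ≤ S) (h₂ : S ≤ (n + 1) * m₂) :
    ∃ γ : Fin (n + 1) → ℝ, (∀ i, γ i ∈ Set.Icc m₁ m₂) ∧ ∑ i, γ i = S ∧
      ∑ i, (γ i - m₁) * (m₂ - γ i) ≤ (m₂ - m₁) ^ 2 / 4 := by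
  induction n generalizing S with
  | zero =>
    refine ⟨fun _ => S, fun _ => ⟨by simpa using h₁, by simpa using h₂⟩, by simp, ?_⟩
    rw [Fin.sum_univ_one]
    nlinarith [sq_nonneg (2 * S - m₁ - m₂)]
  | succ k ih =>
    push_cast at h₁ h₂
    -- Put one coordinate at an endpoint, where it contributes nothing, and recurse.
    obtain ⟨t, ht, ht_end, h₁', h₂'⟩ : ∃ t ∈ Set.Icc m₁ m₂, (t - m₁) * (m₂ - t) = 0 ∧
        (k + 1) * m₁ ≤ S - t ∧ S - t ≤ (k + 1) * m₂ := by
      by_cases hS : (k + 1) * m₁ ≤ S - m₂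
      · exact ⟨m₂, ⟨h, le_rfl⟩, by ring, hS, by linarith⟩
      · have : (k : ℝ) * m₁ ≤ k * m₂ := mul_le_mul_of_nonneg_left h k.cast_nonneg
        exact ⟨m₁, ⟨le_rfl, h⟩, by ring, by linarith, by linarith⟩
    obtain ⟨γ, hγ, hsum, hdefect⟩ := ih h₁' h₂'
    refine ⟨Fin.cons t γ, Fin.cases ht hγ, ?_, ?_⟩
    · rw [Fin.sum_univ_succ]
      simp only [Fin.cons_zero, Fin.cons_succ, hsum]
      ring
    · rw [Fin.sum_univ_succ]
      simp only [Fin.cons_zero, Fin.cons_succ, ht_end]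
      linarith

lemma exists_sum_eq_zero_le_sum_sq {m₁ m₂ : ℝ} (h₁ : m₁ ≤ 0) (h₂ : 0 ≤ m₂) {n : ℕ}
    (hn : 0 < n) :
    ∃ γ : Fin n → ℝ, (∀ i, γ i ∈ Set.Icc m₁ m₂) ∧ ∑ i, γ i = 0 ∧
      -(n * (m₁ * m₂)) - (m₂ - m₁) ^ 2 / 4 ≤ ∑ i, γ i ^ 2 := by
  obtain ⟨k, rfl⟩ : ∃ k, n = k + 1 := ⟨n - 1, by omega⟩
  obtain ⟨γ, hγ, hsum, hdefect⟩ := exists_sum_eq_of_mem_Icc (h₁.trans h₂) k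
    (S := 0) (by nlinarith) (by nlinarith)
  refine ⟨γ, hγ, hsum, ?_⟩
  have hsq : ∑ i, γ i ^ 2
      = ∑ i, ((m₁ + m₂) * γ i - m₁ * m₂) - ∑ i, (γ i - m₁) * (m₂ - γ i) := by
    rw [← sum_sub_distrib]
    exact sum_congr rfl fun i _ => by ring
  rw [hsq, sum_sub_distrib, ← mul_sum, hsum, sum_const, card_univ, Fintype.card_fin,
    nsmul_eq_mul]
  push_cast
  linarith

lemma exists_sum_eq_zero_quadratic_le_one {n : ℕ} (hn : 0 < n) {a b c : ℝ} (hb : 0 < b)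
    (ha : a ≤ 1) (hc : c ^ 2 ≤ a * b) :
    ∃ γ : Fin n → ℝ, ∑ i, γ i = 0 ∧ (∀ i, a + 2 * γ i * c + γ i ^ 2 * b ≤ 1) ∧
      (n * (1 - a) - 1) / b ≤ ∑ i, γ i ^ 2 := by
  set D := c ^ 2 + b * (1 - a)
  have hD : 0 ≤ D := by nlinarith
  have hsD : √D ^ 2 = D := Real.sq_sqrt hD
  have hcD : |c| ≤ √D := Real.abs_le_sqrt (by nlinarith)
  -- `m₁ ≤ m₂` are the roots of `b g² + 2 c g + a - 1`.
  set m₁ := (-c - √D) / b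
  set m₂ := (-c + √D) / b
  have hm₁ : m₁ ≤ 0 := div_nonpos_of_nonpos_of_nonneg (by linarith [neg_abs_le c]) hb.le
  have hm₂ : 0 ≤ m₂ := div_nonneg (by linarith [le_abs_self c]) hb.le
  have hfactor : ∀ g, a + 2 * g * c + g ^ 2 * b - 1 = b * (g - m₁) * (g - m₂) := by
    intro g
    simp only [m₁, m₂]
    field_simp
    linear_combination hsD
  obtain ⟨γ, hγ, hsum, hsq⟩ := exists_sum_eq_zero_le_sum_sq hm₁ hm₂ hn
  refine ⟨γ, hsum, fun i => ?_, le_trans ?_ hsq⟩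
  · have := mul_nonpos_of_nonneg_of_nonpos
      (mul_nonneg hb.le (sub_nonneg.2 (hγ i).1)) (sub_nonpos.2 (hγ i).2)
    linarith [hfactor (γ i)]
  · have hprod : m₁ * m₂ = -(1 - a) / b := by
      simp only [m₁, m₂]
      field_simp
      linear_combination -hsD
    have hgap : (m₂ - m₁) ^ 2 / 4 = D / b ^ 2 := by
      simp only [m₁, m₂]
      field_simp
      linear_combination 4 * hsD
    have hDb : D / b ^ 2 ≤ 1 / b := by
      rw [div_le_div_iff₀ (by positivity) hb]
      nlinarith
    rw [hprod, hgap]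
    have : (n * (1 - a) - 1) / b = -(n * (-(1 - a) / b)) - 1 / b := by ring
    linarith

lemma sQuad_eq_sq_sub (n d : ℕ) (α : Fin d) (x : Fin n → Fin d → ℝ) :
    sQuad n d α x = sLin n d α x ^ 2 - ∑ i, x i α ^ 2 := by
  have hrow : ∀ i, (∑ j, if i = j then (0 : ℝ) else x i α * x j α)
      = ∑ j, x i α * x j α - x i α ^ 2 := by
    intro i
    rw [← sum_erase_add _ _ (mem_univ i), ← sum_erase_add _ _ (mem_univ i)]
    rw [sum_congr rfl fun j hj => if_neg (Ne.symm (ne_of_mem_erase hj))]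
    simp [sq]
  simp only [sQuad, sLin, hrow, sum_sub_distrib, sq, sum_mul_sum]

lemma Qpoly_const (n d : ℕ) (A0 : ℝ) (A B a : Fin d → ℝ) :
    Qpoly n d A0 A B (fun _ => a)
      = A0 + n * ∑ α, A α * a α + n * (n - 1) * ∑ α, B α * a α ^ 2 := by
  simp only [Qpoly, sQuad_eq_sq_sub, sLin, sum_const, card_univ, Fintype.card_fin, nsmul_eq_mul,
    mul_sum]
  rw [add_assoc, add_assoc, ← sum_add_distrib, ← sum_add_distrib]
  exact congrArg _ (sum_congr rfl fun _ _ => by ring)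

def affineConfig {n d : ℕ} (a v : Fin d → ℝ) (γ : Fin n → ℝ) : Fin n → Fin d → ℝ :=
  fun i α => a α + γ i * v α

section affineConfig

variable {n d : ℕ} (a v : Fin d → ℝ) {γ : Fin n → ℝ}

lemma sum_sq_affineConfig (i : Fin n) :
    ∑ α, affineConfig a v γ i α ^ 2
      = ∑ α, a α ^ 2 + 2 * γ i * ∑ α, a α * v α + γ i ^ 2 * ∑ α, v α ^ 2 := by
  simp only [affineConfig, mul_sum, ← sum_add_distrib]
  exact sum_congr rfl fun _ _ => by ring

lemma sLin_affineConfig (hγ : ∑ i, γ i = 0) (α : Fin d) :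
    sLin n d α (affineConfig a v γ) = sLin n d α (fun _ => a) := by
  simp [sLin, affineConfig, sum_add_distrib, ← sum_mul, hγ]

lemma sQuad_affineConfig (hγ : ∑ i, γ i = 0) (α : Fin d) :
    sQuad n d α (affineConfig a v γ)
      = sQuad n d α (fun _ => a) - (∑ i, γ i ^ 2) * v α ^ 2 := by
  have hsq : ∑ i, affineConfig a v γ i α ^ 2
      = ∑ i : Fin n, a α ^ 2 + 2 * a α * v α * ∑ i, γ i + (∑ i, γ i ^ 2) * v α ^ 2 := by
    simp only [affineConfig, mul_sum, sum_mul, ← sum_add_distrib]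
    exact sum_congr rfl fun _ _ => by ring
  rw [sQuad_eq_sq_sub, sQuad_eq_sq_sub, sLin_affineConfig a v hγ, hsq, hγ]
  ring

lemma Qpoly_affineConfig (A0 : ℝ) (A B : Fin d → ℝ) (hγ : ∑ i, γ i = 0) :
    Qpoly n d A0 A B (affineConfig a v γ)
      = Qpoly n d A0 A B (fun _ => a) - (∑ i, γ i ^ 2) * ∑ α, B α * v α ^ 2 := by
  have hpull : ∑ α, B α * ((∑ i, γ i ^ 2) * v α ^ 2)
      = (∑ i, γ i ^ 2) * ∑ α, B α * v α ^ 2 := by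
    rw [mul_sum]
    exact sum_congr rfl fun _ _ => by ring
  simp only [Qpoly, sLin_affineConfig a v hγ, sQuad_affineConfig a v hγ, mul_sub,
    sum_sub_distrib, hpull]
  ring

end affineConfig

lemma PQ_eq_Qpoly_const {n : ℕ} (hn : 0 < n) (d : ℕ) (A0 : ℝ) (A B X Y : Fin d → ℝ) :
    PQ n d A0 A B X Y
      = Qpoly n d A0 A B (fun _ α => X α / √n) - n * ∑ α, B α * Y α ^ 2 := by
  have hs : √(n : ℝ) ≠ 0 := by positivity
  have hs2 : √(n : ℝ) ^ 2 = n := Real.sq_sqrt n.cast_nonneg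
  have hLin : n * ∑ α, A α * (X α / √n) = √n * ∑ α, A α * X α := by
    rw [mul_sum, mul_sum]
    refine sum_congr rfl fun _ _ => ?_
    field_simp
    rw [hs2]
    ring
  have hQuad : n * (n - 1) * ∑ α, B α * (X α / √n) ^ 2 = (n - 1) * ∑ α, B α * X α ^ 2 := by
    rw [mul_sum, mul_sum]
    refine sum_congr rfl fun _ _ => ?_
    field_simp
    rw [hs2]
    ring
  rw [PQ, Qpoly_const, hLin, hQuad]

def QpolyNonneg (n d : ℕ) (A0 : ℝ) (A B : Fin d → ℝ) : Prop :=
  ∀ x : Fin n → Fin d → ℝ, (∀ i, ∑ α, x i α ^ 2 ≤ 1) → 0 ≤ Qpoly n d A0 A B x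

section QpolyNonneg

variable {n d : ℕ} {A0 : ℝ} {A B : Fin d → ℝ}

lemma QpolyNonneg.le_Qpoly_const (hQ : QpolyNonneg n d A0 A B) (hn : 0 < n) {a v : Fin d → ℝ}
    (ha : ∑ α, a α ^ 2 ≤ 1) (hv : 0 < ∑ α, v α ^ 2) (hR : 0 ≤ ∑ α, B α * v α ^ 2) :
    (n * (1 - ∑ α, a α ^ 2) - 1) / (∑ α, v α ^ 2) * ∑ α, B α * v α ^ 2
      ≤ Qpoly n d A0 A B (fun _ => a) := by
  obtain ⟨γ, hγ, hball, hspread⟩ := exists_sum_eq_zero_quadratic_le_one hn hv ha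
    (sum_mul_sq_le_sq_mul_sq univ a v)
  have hx := hQ (affineConfig a v γ) fun i => by
    rw [sum_sq_affineConfig]
    linarith [hball i]
  rw [Qpoly_affineConfig a v A0 A B hγ] at hx
  nlinarith [mul_le_mul_of_nonneg_right hspread hR]

lemma QpolyNonneg.sum_mul_sq_div_le (hQ : QpolyNonneg n d A0 A B) (hn : 2 ≤ n) {v : Fin d → ℝ}
    (hv : 0 < ∑ α, v α ^ 2) (hR : 0 ≤ ∑ α, B α * v α ^ 2) :
    (∑ α, B α * v α ^ 2) / ∑ α, v α ^ 2 ≤ A0 / (n - 1) := by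
  have hn₁ : (0 : ℝ) < n - 1 := by
    have : (2 : ℝ) ≤ n := by exact_mod_cast hn
    linarith
  have h : (n - 1) / (∑ α, v α ^ 2) * ∑ α, B α * v α ^ 2 ≤ A0 := by
    simpa [Qpoly_const] using hQ.le_Qpoly_const (by omega) (a := 0) (by simp) hv hR
  rw [div_le_div_iff₀ hv hn₁]
  rw [div_mul_eq_mul_div, div_le_iff₀ hv] at h
  linarith

lemma QpolyNonneg.mul_sub_div_le_Qpoly_const (hQ : QpolyNonneg n d A0 A B) (hn : 0 < n)
    {a v : Fin d → ℝ} (hav : ∑ α, a α ^ 2 + ∑ α, v α ^ 2 ≤ 1) (hv : 0 < ∑ α, v α ^ 2)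
    (hR : 0 ≤ ∑ α, B α * v α ^ 2) :
    n * ∑ α, B α * v α ^ 2 - (∑ α, B α * v α ^ 2) / ∑ α, v α ^ 2
      ≤ Qpoly n d A0 A B (fun _ => a) := by
  set b := ∑ α, v α ^ 2
  set R := ∑ α, B α * v α ^ 2
  have hroom : n * b ≤ n * (1 - ∑ α, a α ^ 2) :=
    mul_le_mul_of_nonneg_left (by linarith) n.cast_nonneg
  calc n * R - R / b = (n * b - 1) / b * R := by field_simp
    _ ≤ (n * (1 - ∑ α, a α ^ 2) - 1) / b * R := by gcongr
    _ ≤ _ := hQ.le_Qpoly_const hn (by linarith) hv hR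

end QpolyNonneg

lemma sum_sq_pos_of_sum_mul_sq_pos {ι : Type*} [Fintype ι] {B v : ι → ℝ}
    (h : 0 < ∑ i, B i * v i ^ 2) : 0 < ∑ i, v i ^ 2 := by
  refine (sum_nonneg fun i _ => sq_nonneg (v i)).lt_of_ne fun hv => h.ne' ?_
  rw [eq_comm, sum_eq_zero_iff_of_nonneg fun _ _ => sq_nonneg _] at hv
  simp [hv]

theorem stmt_13_general (n d : ℕ) (hn : 2 ≤ n)
    (A0 : ℝ) (A B : Fin d → ℝ)
    (hQ : ∀ x : Fin n → Fin d → ℝ, (∀ i, ∑ α, (x i α) ^ 2 ≤ 1) →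
      0 ≤ Qpoly n d A0 A B x) :
    ∀ X Y : Fin d → ℝ,
      (∑ α, (Y α) ^ 2) + (∑ α, (X α) ^ 2) / n ≤ 1 →
      0 ≤ PQ n d A0 A B X Y + A0 / ((n : ℝ) - 1) := by
  intro X Y hXY
  set a : Fin d → ℝ := fun α => X α / √n
  have ha : ∑ α, a α ^ 2 = (∑ α, X α ^ 2) / n := by
    simp only [a, div_pow, Real.sq_sqrt n.cast_nonneg, sum_div]
  rw [PQ_eq_Qpoly_const (by omega)]
  have hA0 : 0 ≤ A0 := by simpa [Qpoly_const] using hQ (fun _ _ => 0) (by simp)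
  rcases le_or_gt (∑ α, B α * Y α ^ 2) 0 with hR | hR
  · have hY : 0 ≤ ∑ α, Y α ^ 2 := by positivity
    have hconst := hQ (fun _ => a) fun _ => by linarith
    have hA0n : 0 ≤ A0 / ((n : ℝ) - 1) :=
      div_nonneg hA0 (sub_nonneg.2 (by exact_mod_cast (by omega : 1 ≤ n)))
    nlinarith
  have hY := sum_sq_pos_of_sum_mul_sq_pos hR
  have hcentre := QpolyNonneg.sum_mul_sq_div_le hQ hn hY hR.le
  have hshift :=
    QpolyNonneg.mul_sub_div_le_Qpoly_const hQ (by omega) (a := a) (by linarith) hY hR.le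
  linarith

theorem stmt_13 (n d : ℕ) (hn : 2 ≤ n) (hd : 1 ≤ d)
    (A0 : ℝ) (A B : Fin d → ℝ)
    (hQ : ∀ x : Fin n → Fin d → ℝ, (∀ i, ∑ α, (x i α) ^ 2 ≤ 1) →
      0 ≤ Qpoly n d A0 A B x) :
    ∀ X Y : Fin d → ℝ,
      (∑ α, (Y α) ^ 2) + (∑ α, (X α) ^ 2) / n ≤ 1 →
      0 ≤ PQ n d A0 A B X Y + A0 / ((n : ℝ) - 1) :=
  stmt_13_general n d hn A0 A B hQ
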